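/- arXiv:2502.13536 — 2 statements merged into one kernel-verified Lean document; each statement's English description precedes it below -/
import Mathlib

section
/- Let n, m ≥ 1 and let f be a full assignment on an n×m Slant board whose diagonal graph G(f) is acyclic. Then the number of cells c with f(c) = true is at most (the number of vertices (x,y) with x ≤ n, y ≤ m and x+y even) − 1, and the number of cells c with f(c) = false is at most (the number of vertices (x,y) with x ≤ n, y ≤ m and x+y odd) − 1. In particular each of the two counts is at least n·m minus the other bound, so each parity class contains roughly half of the n·m diagonals. -/
/-!
Slant boards.

An `n×m` Slant board has cells indexed by `Fin n × Fin m` and vertices indexed by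
`Fin (n+1) × Fin (m+1)`.  The four corners of cell `(i,j)` are the vertices
`(i,j)`, `(i+1,j)`, `(i,j+1)`, `(i+1,j+1)`.  A full assignment is a function from
cells to `Bool`: `true` means the cell contains the diagonal joining its two
corners with even coordinate sums, `false` the other diagonal.
-/

namespace Slant

abbrev Cell (n m : ℕ) := Fin n × Fin m
abbrev Vertex (n m : ℕ) := Fin (n + 1) × Fin (m + 1)

variable {n m : ℕ}

def corner00 (c : Cell n m) : Vertex n m := (c.1.castSucc, c.2.castSucc)
def corner10 (c : Cell n m) : Vertex n m := (c.1.succ, c.2.castSucc)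
def corner01 (c : Cell n m) : Vertex n m := (c.1.castSucc, c.2.succ)
def corner11 (c : Cell n m) : Vertex n m := (c.1.succ, c.2.succ)

/-- The endpoints of the diagonal of cell `c` joining the two corners whose
coordinate sums are even. -/
def evenDiag (c : Cell n m) : Vertex n m × Vertex n m :=
  if (c.1.val + c.2.val) % 2 = 0 then (corner00 c, corner11 c) else (corner10 c, corner01 c)

/-- The endpoints of the diagonal of cell `c` joining the two corners whose
coordinate sums are odd. -/
def oddDiag (c : Cell n m) : Vertex n m × Vertex n m :=
  if (c.1.val + c.2.val) % 2 = 0 then (corner10 c, corner01 c) else (corner00 c, corner11 c)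

/-- The endpoints of the diagonal chosen in cell `c` by the assignment value `b`. -/
def diagEnds (c : Cell n m) (b : Bool) : Vertex n m × Vertex n m :=
  if b then evenDiag c else oddDiag c

/-- The diagonal graph of the (partial) assignment `p`, using only the cells in `D`:
two vertices are adjacent iff the chosen diagonal of some cell in `D` joins them.
For a full assignment take `D = Set.univ`. -/
def DiagGraph (D : Set (Cell n m)) (p : Cell n m → Bool) : SimpleGraph (Vertex n m) :=
  SimpleGraph.fromRel (fun u v => ∃ c ∈ D, diagEnds c (p c) = (u, v))

/-- `v` is one of the four corners of cell `c`. -/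
def isCorner (v : Vertex n m) (c : Cell n m) : Prop :=
  v = corner00 c ∨ v = corner10 c ∨ v = corner01 c ∨ v = corner11 c

/-- The chosen diagonal of cell `c` under assignment `f` passes through vertex `v`. -/
def passesThrough (f : Cell n m → Bool) (c : Cell n m) (v : Vertex n m) : Prop :=
  (diagEnds c (f c)).1 = v ∨ (diagEnds c (f c)).2 = v

/-- The degree of a vertex in a graph on the board's vertices. -/
noncomputable def deg (G : SimpleGraph (Vertex n m)) (v : Vertex n m) : ℕ :=
  (G.neighborSet v).ncard

/-!
A `true` diagonal joins two vertices of even coordinate sum, a `false` diagonal two of odd sum,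
and a cell is recovered from its diagonal as the coordinatewise minimum of the endpoints. So the
cells of one class give distinct edges of `G(f)` among the vertices of the matching parity; being
acyclic, these edges number at most (that many vertices) − 1, as one sees by extending them to a
spanning tree of the complete graph. The lower bounds follow because the two classes partition
the `n·m` cells.
-/

end Slant

namespace SimpleGraph

open Finset

variable {V : Type*} [Fintype V] {G : SimpleGraph V}

lemma IsAcyclic.card_edgeFinset_add_one_le [Nonempty V] [Fintype G.edgeSet] (hG : G.IsAcyclic) :
    #G.edgeFinset + 1 ≤ Fintype.card V := by
  classical
  obtain ⟨T, hGT, -, hT⟩ := connected_top.exists_isTree_le_of_le_of_isAcyclic le_top hG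
  rw [← hT.card_edgeFinset]
  gcongr

lemma IsAcyclic.card_edgeFinset_filter_le [DecidableEq V] [Fintype G.edgeSet] (hG : G.IsAcyclic)
    (s : Finset V) : #{e ∈ G.edgeFinset | ∀ v ∈ e, v ∈ s} ≤ #s - 1 := by
  classical
  rcases s.eq_empty_or_nonempty with rfl | hs
  · simpa using fun e _ => ⟨_, Sym2.out_fst_mem e⟩
  have : Nonempty s := hs.to_subtype
  have hind := (hG.induce (s : Set V)).card_edgeFinset_add_one_le
  simp only [coe_sort_coe, Fintype.card_coe] at hind
  refine (card_le_card_of_surjOn (s := (G.induce (s : Set V)).edgeFinset) (Sym2.map Subtype.val)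
    fun e he => ?_).trans (by omega)
  induction e with
  | h u v =>
    simp only [coe_filter, mem_edgeFinset, mem_edgeSet, Sym2.mem_iff, forall_eq_or_imp,
      forall_eq, Set.mem_ofPred_eq] at he
    obtain ⟨huv, hu, hv⟩ := he
    exact ⟨s(⟨u, hu⟩, ⟨v, hv⟩), by simpa using huv, rfl⟩

end SimpleGraph

namespace Slant

open Finset

variable {n m : ℕ}

lemma diagEnds_parity (c : Cell n m) (b : Bool) :
    ((diagEnds c b).1.1.val + (diagEnds c b).1.2.val) % 2 = cond b 0 1 ∧
    ((diagEnds c b).2.1.val + (diagEnds c b).2.2.val) % 2 = cond b 0 1 := by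
  cases b <;>
  · simp only [diagEnds, Bool.false_eq_true, ↓reduceIte, evenDiag, oddDiag, corner00, corner01,
      corner10, corner11]
    split_ifs <;> simp only [Fin.val_succ, Fin.val_castSucc, cond_true, cond_false] <;> omega

lemma diagEnds_fst_ne_snd (c : Cell n m) (b : Bool) : (diagEnds c b).1 ≠ (diagEnds c b).2 := by
  cases b <;>
  · simp only [diagEnds, Bool.false_eq_true, ↓reduceIte, evenDiag, oddDiag, corner00, corner01,
      corner10, corner11]
    split_ifs <;> simp [Fin.ext_iff]

lemma min_diagEnds (c : Cell n m) (b : Bool) :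
    min (diagEnds c b).1.1 (diagEnds c b).2.1 = c.1.castSucc ∧
    min (diagEnds c b).1.2 (diagEnds c b).2.2 = c.2.castSucc := by
  cases b <;>
  · simp only [diagEnds, Bool.false_eq_true, ↓reduceIte, evenDiag, oddDiag, corner00, corner01,
      corner10, corner11]
    split_ifs <;> simp [Fin.le_iff_val_le_val]

def diagEdge (c : Cell n m) (b : Bool) : Sym2 (Vertex n m) := s((diagEnds c b).1, (diagEnds c b).2)

lemma diagEdge_injective (b : Bool) : Function.Injective fun c : Cell n m => diagEdge c b := by
  intro c d hcd
  suffices c.1.castSucc = d.1.castSucc ∧ c.2.castSucc = d.2.castSucc from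
    Prod.ext (Fin.castSucc_injective _ this.1) (Fin.castSucc_injective _ this.2)
  rw [← (min_diagEnds c b).1, ← (min_diagEnds c b).2, ← (min_diagEnds d b).1,
    ← (min_diagEnds d b).2]
  rcases Sym2.mk_eq_mk_iff.mp hcd with h | h <;> simp [h, min_comm]

lemma diagEdge_mem_edgeSet (f : Cell n m → Bool) (c : Cell n m) :
    diagEdge c (f c) ∈ (DiagGraph Set.univ f).edgeSet :=
  ⟨diagEnds_fst_ne_snd c (f c), .inl ⟨c, Set.mem_univ c, rfl⟩⟩

lemma card_filter_eq_le_card_parity_sub_one (f : Cell n m → Bool)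
    (hf : (DiagGraph Set.univ f).IsAcyclic) (b : Bool) :
    #{c | f c = b} ≤ #{v : Vertex n m | (v.1.val + v.2.val) % 2 = cond b 0 1} - 1 := by
  classical
  calc #{c | f c = b}
      ≤ #{e ∈ (DiagGraph Set.univ f).edgeFinset | ∀ v ∈ e,
          v ∈ ({v : Vertex n m | (v.1.val + v.2.val) % 2 = cond b 0 1} : Finset _)} := by
        refine card_le_card_of_injOn (diagEdge · b) (fun c hc => ?_) (diagEdge_injective b).injOn
        rw [mem_coe, mem_filter_univ] at hc
        subst hc
        refine mem_filter.mpr ⟨SimpleGraph.mem_edgeFinset.mpr (diagEdge_mem_edgeSet f c), ?_⟩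
        simp only [diagEdge, Sym2.mem_iff, mem_filter_univ]
        rintro v (rfl | rfl)
        exacts [(diagEnds_parity c _).1, (diagEnds_parity c _).2]
    _ ≤ _ := hf.card_edgeFinset_filter_le _

theorem parity_class_count_general (n m : ℕ) (f : Cell n m → Bool)
    (hf : (DiagGraph (Set.univ : Set (Cell n m)) f).IsAcyclic) :
    ((Finset.univ.filter fun c : Cell n m => f c = true).card ≤
        (Finset.univ.filter fun v : Vertex n m => (v.1.val + v.2.val) % 2 = 0).card - 1) ∧
    ((Finset.univ.filter fun c : Cell n m => f c = false).card ≤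
        (Finset.univ.filter fun v : Vertex n m => (v.1.val + v.2.val) % 2 = 1).card - 1) ∧
    (n * m - ((Finset.univ.filter fun v : Vertex n m => (v.1.val + v.2.val) % 2 = 1).card - 1) ≤
        (Finset.univ.filter fun c : Cell n m => f c = true).card) ∧
    (n * m - ((Finset.univ.filter fun v : Vertex n m => (v.1.val + v.2.val) % 2 = 0).card - 1) ≤
        (Finset.univ.filter fun c : Cell n m => f c = false).card) := by
  have htrue := card_filter_eq_le_card_parity_sub_one f hf true
  have hfalse := card_filter_eq_le_card_parity_sub_one f hf false
  have hsum : #{c | f c = true} + #{c | f c = false} = n * m := by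
    simpa using card_filter_add_card_filter_not (s := univ) fun c : Cell n m => f c = true
  simp only [cond_true, cond_false] at htrue hfalse
  exact ⟨htrue, hfalse, by omega, by omega⟩

/-- In an acyclic full assignment, the diagonals of each parity class
form a forest on the vertices of that parity; so each count of cells is at most (number
of vertices of that parity) − 1, and hence at least `n·m` minus the other bound. -/
theorem parity_class_count (n m : ℕ) (hn : 1 ≤ n) (hm : 1 ≤ m) (f : Cell n m → Bool)
    (hf : (DiagGraph (Set.univ : Set (Cell n m)) f).IsAcyclic) :
    ((Finset.univ.filter fun c : Cell n m => f c = true).card ≤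
        (Finset.univ.filter fun v : Vertex n m => (v.1.val + v.2.val) % 2 = 0).card - 1) ∧
    ((Finset.univ.filter fun c : Cell n m => f c = false).card ≤
        (Finset.univ.filter fun v : Vertex n m => (v.1.val + v.2.val) % 2 = 1).card - 1) ∧
    (n * m - ((Finset.univ.filter fun v : Vertex n m => (v.1.val + v.2.val) % 2 = 1).card - 1) ≤
        (Finset.univ.filter fun c : Cell n m => f c = true).card) ∧
    (n * m - ((Finset.univ.filter fun v : Vertex n m => (v.1.val + v.2.val) % 2 = 0).card - 1) ≤
        (Finset.univ.filter fun c : Cell n m => f c = false).card) :=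
  parity_class_count_general n m f hf

end Slant
end

section
/- Let K be a finite set of clues on an n×m Slant board, let D be a set of cells containing every cell that has a clued vertex as a corner, and let p be a partial assignment on D whose diagonal graph G(p) is acyclic and in which every clued vertex v has degree in G(p) equal to its clue value. Then there exists a full assignment f extending p whose diagonal graph G(f) is acyclic and which satisfies every clue in K; in particular the degree in G(f) of every clued vertex equals its degree in G(p). -/
/-!
Slant boards.

An `n×m` Slant board has cells indexed by `Fin n × Fin m` and vertices indexed by
`Fin (n+1) × Fin (m+1)`.  The four corners of cell `(i,j)` are the vertices
`(i,j)`, `(i+1,j)`, `(i,j+1)`, `(i+1,j+1)`.  A full assignment is a function from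
cells to `Bool`: `true` means the cell contains the diagonal joining its two
corners with even coordinate sums, `false` the other diagonal.
-/

namespace Slant

variable {n m : ℕ}

/-!
Even diagonals join vertices with even coordinate sum, odd diagonals vertices with odd coordinate
sum, so an undecided cell can take its even diagonal unless its two even corners are already
connected, and its odd diagonal unless its two odd corners are.  Both cannot happen: a path of even
diagonals between the even corners of `c`, closed up by the even diagonal of `c`, is a mod 2 cycle
which the odd diagonal of `c` crosses once and no other odd diagonal crosses at all, so the odd
corners of `c` lie on different sides of it.  The side is detected by the parity of the number of
cycle edges reaching the vertical ray above a vertex from the left: within a column of cells the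
cycle meets the grid line on the left as often as the one on the right, mod 2.  Filling the cells
one at a time thus keeps the graph acyclic, and clued vertices keep their degree because all cells
around them are already decided.
-/

def IsEvenVertex (v : Vertex n m) : Prop := Even (v.1.val + v.2.val)

lemma isEvenVertex_evenDiag (c : Cell n m) :
    IsEvenVertex (evenDiag c).1 ∧ IsEvenVertex (evenDiag c).2 := by
  simp only [IsEvenVertex, evenDiag, corner00, corner11, corner10, corner01, Nat.even_iff]
  split_ifs <;> simp only [Fin.val_castSucc, Fin.val_succ] <;> omega

lemma not_isEvenVertex_oddDiag (c : Cell n m) :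
    ¬IsEvenVertex (oddDiag c).1 ∧ ¬IsEvenVertex (oddDiag c).2 := by
  simp only [IsEvenVertex, oddDiag, corner00, corner11, corner10, corner01, Nat.even_iff]
  split_ifs <;> simp only [Fin.val_castSucc, Fin.val_succ] <;> omega

@[simp] lemma evenDiag_fst_snd (c : Cell n m) : (evenDiag c).1.2 = c.2.castSucc := by
  unfold evenDiag; split_ifs <;> rfl

@[simp] lemma evenDiag_snd_snd (c : Cell n m) : (evenDiag c).2.2 = c.2.succ := by
  unfold evenDiag; split_ifs <;> rfl

@[simp] lemma oddDiag_fst_snd (c : Cell n m) : (oddDiag c).1.2 = c.2.castSucc := by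
  unfold oddDiag; split_ifs <;> rfl

@[simp] lemma oddDiag_snd_snd (c : Cell n m) : (oddDiag c).2.2 = c.2.succ := by
  unfold oddDiag; split_ifs <;> rfl

/-- Within a column, the even diagonal of `c'` lies entirely above or entirely below the odd
diagonal of `c`, except when `c' = c`, where the two diagonals cross. -/
lemma evenDiag_sameSide_oddDiag_iff {c c' : Cell n m} (hcol : c'.2 = c.2) :
    ((evenDiag c').1.1 < (oddDiag c).1.1 ↔ (evenDiag c').2.1 < (oddDiag c).2.1) ↔ c' ≠ c := by
  obtain ⟨i', j'⟩ := c'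
  obtain ⟨i, j⟩ := c
  obtain rfl : j' = j := hcol
  simp only [evenDiag, oddDiag, corner00, corner11, corner10, corner01, ne_eq, Prod.mk.injEq,
    and_true, Fin.ext_iff]
  split_ifs <;> simp only [Fin.lt_def, Fin.val_castSucc, Fin.val_succ] <;> omega

/-- The mod 2 boundary of a chain of even diagonals, where `z c = 1` means that the even diagonal
of `c` belongs to the chain. -/
def evenBoundary : (Cell n m → ZMod 2) →ₗ[ZMod 2] Vertex n m → ZMod 2 :=
  Fintype.linearCombination (ZMod 2) fun c =>
    Pi.single (evenDiag c).1 1 + Pi.single (evenDiag c).2 1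

lemma evenBoundary_single (c : Cell n m) :
    evenBoundary (Pi.single c 1) = Pi.single (evenDiag c).1 1 + Pi.single (evenDiag c).2 1 := by
  simp [evenBoundary]

lemma sum_evenBoundary_apply (z : Cell n m → ZMod 2) (A : Finset (Vertex n m)) :
    ∑ w ∈ A, evenBoundary z w =
      ∑ c with (evenDiag c).1 ∈ A, z c + ∑ c with (evenDiag c).2 ∈ A, z c := by
  simp only [evenBoundary, Fintype.linearCombination_apply, Finset.sum_apply, Pi.smul_apply,
    Pi.add_apply, smul_eq_mul, mul_add, Finset.sum_add_distrib, Finset.sum_filter]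
  rw [Finset.sum_comm, Finset.sum_comm (s := A)]
  simp [Pi.single_apply, Finset.sum_ite_eq']

lemma sum_evenDiag_fst_eq_snd {z : Cell n m → ZMod 2} (hz : evenBoundary z = 0)
    (A : Finset (Vertex n m)) :
    ∑ c with (evenDiag c).1 ∈ A, z c = ∑ c with (evenDiag c).2 ∈ A, z c := by
  rw [← CharTwo.add_eq_zero, ← sum_evenBoundary_apply, hz]
  simp

/-- The vertices strictly above `v` (smaller first coordinate) on its vertical grid line. -/
def rayAbove (v : Vertex n m) : Finset (Vertex n m) := {w | w.2 = v.2 ∧ w.1 < v.1}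

/-- The parity of the number of edges of `z` ending on the ray above `v` from the left.  For a
cycle `z` and odd `v` this tells on which side of `z` the vertex `v` lies. -/
def crossing (z : Cell n m → ZMod 2) (v : Vertex n m) : ZMod 2 :=
  ∑ c with (evenDiag c).2 ∈ rayAbove v, z c

theorem crossing_oddDiag_add {z : Cell n m → ZMod 2} (hz : evenBoundary z = 0) (c : Cell n m) :
    crossing z (oddDiag c).1 + crossing z (oddDiag c).2 = z c := by
  rw [crossing, ← sum_evenDiag_fst_eq_snd hz, crossing]
  simp only [rayAbove, Finset.mem_filter, Finset.mem_univ, true_and, evenDiag_fst_snd,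
    evenDiag_snd_snd, oddDiag_fst_snd, oddDiag_snd_snd, Fin.castSucc_inj, Fin.succ_inj,
    Finset.sum_filter, ← Finset.sum_add_distrib]
  rw [Finset.sum_eq_single c]
  · have h := fun h' => (evenDiag_sameSide_oddDiag_iff (c' := c) rfl).mp h' rfl
    by_cases h1 : (evenDiag c).1.1 < (oddDiag c).1.1 <;> simp_all
  · intro c' _ hc
    by_cases hcol : c'.2 = c.2
    · rw [← evenDiag_sameSide_oddDiag_iff hcol] at hc
      simp only [hcol, true_and, hc]
      split_ifs <;> simp [CharTwo.add_self_eq_zero]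
    · simp [hcol]
  · simp

lemma diagGraph_adj_iff {D : Set (Cell n m)} {p : Cell n m → Bool} {u v : Vertex n m} :
    (DiagGraph D p).Adj u v ↔
      u ≠ v ∧ ∃ c ∈ D, diagEnds c (p c) = (u, v) ∨ diagEnds c (p c) = (v, u) := by
  simp only [DiagGraph, SimpleGraph.fromRel_adj, ← exists_or, ← and_or_left]

lemma diagGraph_union (D E : Set (Cell n m)) (p : Cell n m → Bool) :
    DiagGraph (D ∪ E) p = DiagGraph D p ⊔ DiagGraph E p := by
  ext u v
  simp only [SimpleGraph.sup_adj, diagGraph_adj_iff, Set.mem_union, or_and_right, exists_or,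
    and_or_left]
  exact or_or_or_comm

lemma diagGraph_congr {D : Set (Cell n m)} {p q : Cell n m → Bool} (h : ∀ c ∈ D, p c = q c) :
    DiagGraph D p = DiagGraph D q := by
  ext u v
  simp only [diagGraph_adj_iff]
  exact and_congr_right fun _ => exists_congr fun c => and_congr_right fun hc => by rw [h c hc]

lemma diagGraph_singleton (c : Cell n m) (p : Cell n m → Bool) :
    DiagGraph {c} p = SimpleGraph.edge (diagEnds c (p c)).1 (diagEnds c (p c)).2 := by
  ext u v
  simp only [diagGraph_adj_iff, Set.mem_singleton_iff, exists_eq_left, SimpleGraph.edge_adj]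
  obtain ⟨e₁, e₂⟩ := diagEnds c (p c)
  simp only [Prod.mk.injEq, eq_comm (a := u), eq_comm (a := v)]
  tauto

lemma isEvenVertex_diagEnds_fst_iff (c : Cell n m) (b : Bool) :
    IsEvenVertex (diagEnds c b).1 ↔ b = true := by
  cases b
  · simpa [diagEnds] using (not_isEvenVertex_oddDiag c).1
  · simpa [diagEnds] using (isEvenVertex_evenDiag c).1

lemma isEvenVertex_diagEnds_snd_iff (c : Cell n m) (b : Bool) :
    IsEvenVertex (diagEnds c b).2 ↔ b = true := by
  cases b
  · simpa [diagEnds] using (not_isEvenVertex_oddDiag c).2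
  · simpa [diagEnds] using (isEvenVertex_evenDiag c).2

section Walks

variable {D : Set (Cell n m)} {p : Cell n m → Bool} {u v : Vertex n m}

lemma exists_evenDiag_of_adj (h : (DiagGraph D p).Adj u v) (hu : IsEvenVertex u) :
    ∃ c ∈ D, p c = true ∧ (evenDiag c = (u, v) ∨ evenDiag c = (v, u)) := by
  obtain ⟨-, c, hcD, hc⟩ := diagGraph_adj_iff.mp h
  have hpc : p c = true := by
    rcases hc with hc | hc
    · rwa [← isEvenVertex_diagEnds_fst_iff c, hc]
    · rwa [← isEvenVertex_diagEnds_snd_iff c, hc]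
  exact ⟨c, hcD, hpc, by simpa [diagEnds, hpc] using hc⟩

lemma exists_oddDiag_of_adj (h : (DiagGraph D p).Adj u v) (hu : ¬IsEvenVertex u) :
    ∃ c ∈ D, p c = false ∧ (oddDiag c = (u, v) ∨ oddDiag c = (v, u)) := by
  obtain ⟨-, c, hcD, hc⟩ := diagGraph_adj_iff.mp h
  have hpc : p c = false := by
    rcases hc with hc | hc
    · rwa [← Bool.not_eq_true, ← isEvenVertex_diagEnds_fst_iff c, hc]
    · rwa [← Bool.not_eq_true, ← isEvenVertex_diagEnds_snd_iff c, hc]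
  exact ⟨c, hcD, hpc, by simpa [diagEnds, hpc] using hc⟩

lemma exists_evenChain_of_reachable (h : (DiagGraph D p).Reachable u v) (hu : IsEvenVertex u) :
    ∃ z : Cell n m → ZMod 2, (∀ c, z c ≠ 0 → c ∈ D ∧ p c = true) ∧
      evenBoundary z = Pi.single u 1 + Pi.single v 1 := by
  obtain ⟨W⟩ := h
  induction W with
  | nil => exact ⟨0, by simp, by simp [CharTwo.add_self_eq_zero]⟩
  | @cons a b v hab W ih =>
    obtain ⟨c, hcD, hpc, hends⟩ := exists_evenDiag_of_adj hab hu
    have hb : IsEvenVertex b := by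
      rcases hends with e | e
      · simpa [e] using (isEvenVertex_evenDiag c).2
      · simpa [e] using (isEvenVertex_evenDiag c).1
    obtain ⟨z, hz, hzb⟩ := ih hb
    refine ⟨z + Pi.single c 1, fun c' hc' => ?_, ?_⟩
    · by_cases hc'c : c' = c
      · exact hc'c ▸ ⟨hcD, hpc⟩
      · exact hz c' (by simpa [hc'c] using hc')
    · rw [map_add, hzb, evenBoundary_single]
      rcases hends with e | e <;> rw [e] <;>
        linear_combination CharTwo.add_self_eq_zero (Pi.single b 1 : Vertex n m → ZMod 2)

lemma crossing_eq_of_reachable {z : Cell n m → ZMod 2} (hz : evenBoundary z = 0)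
    (hzD : ∀ c ∈ D, p c = false → z c = 0) (h : (DiagGraph D p).Reachable u v)
    (hu : ¬IsEvenVertex u) : crossing z u = crossing z v := by
  obtain ⟨W⟩ := h
  induction W with
  | nil => rfl
  | @cons a b v hab W ih =>
    obtain ⟨c, hcD, hpc, hends⟩ := exists_oddDiag_of_adj hab hu
    have hcross := crossing_oddDiag_add hz c
    rw [hzD c hcD hpc, CharTwo.add_eq_zero] at hcross
    rcases hends with e | e <;> rw [e] at hcross
    · exact hcross.trans (ih (by simpa [e] using (not_isEvenVertex_oddDiag c).2))
    · exact hcross.symm.trans (ih (by simpa [e] using (not_isEvenVertex_oddDiag c).1))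

lemma exists_evenCycle_of_reachable {c : Cell n m} (hc : c ∉ D)
    (h : (DiagGraph D p).Reachable (evenDiag c).1 (evenDiag c).2) :
    ∃ z : Cell n m → ZMod 2,
      evenBoundary z = 0 ∧ z c = 1 ∧ ∀ c' ∈ D, p c' = false → z c' = 0 := by
  obtain ⟨z, hz, hzb⟩ := exists_evenChain_of_reachable h (isEvenVertex_evenDiag c).1
  have hz0 : ∀ c', c' ∉ D ∨ p c' = false → z c' = 0 := fun c' hc' => by
    by_contra hne
    grind [hz c' hne]
  refine ⟨z + Pi.single c 1, ?_, by simp [hz0 c (.inl hc)], fun c' hc'D hpc' => ?_⟩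
  · rw [map_add, hzb, evenBoundary_single]
    exact CharTwo.add_self_eq_zero _
  · simp [hz0 c' (.inr hpc'), ne_of_mem_of_not_mem hc'D hc]

theorem not_reachable_oddDiag_of_reachable_evenDiag {c : Cell n m} (hc : c ∉ D)
    (h : (DiagGraph D p).Reachable (evenDiag c).1 (evenDiag c).2) :
    ¬(DiagGraph D p).Reachable (oddDiag c).1 (oddDiag c).2 := by
  intro ho
  obtain ⟨z, hz, hzc, hzD⟩ := exists_evenCycle_of_reachable hc h
  have hcross := crossing_oddDiag_add hz c
  rw [crossing_eq_of_reachable hz hzD ho (not_isEvenVertex_oddDiag c).1,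
    CharTwo.add_self_eq_zero, hzc] at hcross
  exact zero_ne_one hcross

end Walks

lemma diagGraph_insert_update {D : Set (Cell n m)} {c : Cell n m} (hc : c ∉ D)
    (p : Cell n m → Bool) (b : Bool) :
    DiagGraph (insert c D) (Function.update p c b) =
      DiagGraph D p ⊔ SimpleGraph.edge (diagEnds c b).1 (diagEnds c b).2 := by
  rw [Set.insert_eq, diagGraph_union, diagGraph_singleton, Function.update_self, sup_comm,
    diagGraph_congr fun c' hc' => Function.update_of_ne (ne_of_mem_of_not_mem hc' hc) b p]

lemma exists_isAcyclic_diagGraph_insert {D : Set (Cell n m)} {p : Cell n m → Bool}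
    (hacyc : (DiagGraph D p).IsAcyclic) {c : Cell n m} (hc : c ∉ D) :
    ∃ b, (DiagGraph (insert c D) (Function.update p c b)).IsAcyclic := by
  by_cases he : (DiagGraph D p).Reachable (evenDiag c).1 (evenDiag c).2
  · refine ⟨false, ?_⟩
    rw [diagGraph_insert_update hc]
    exact hacyc.sup_edge_of_not_reachable (not_reachable_oddDiag_of_reachable_evenDiag hc he)
  · refine ⟨true, ?_⟩
    rw [diagGraph_insert_update hc]
    exact hacyc.sup_edge_of_not_reachable he

lemma exists_isAcyclic_diagGraph_union {D : Set (Cell n m)} {p : Cell n m → Bool}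
    (hacyc : (DiagGraph D p).IsAcyclic) (s : Finset (Cell n m)) :
    ∃ q : Cell n m → Bool, (∀ c ∈ D, q c = p c) ∧ (DiagGraph (D ∪ s) q).IsAcyclic := by
  induction s using Finset.induction_on with
  | empty => exact ⟨p, fun _ _ => rfl, by simpa using hacyc⟩
  | @insert c s _ ih =>
    obtain ⟨q, hqp, hq⟩ := ih
    rw [Finset.coe_insert, Set.union_insert]
    by_cases hc : c ∈ D ∪ s
    · exact ⟨q, hqp, by rwa [Set.insert_eq_of_mem hc]⟩
    obtain ⟨b, hb⟩ := exists_isAcyclic_diagGraph_insert hq hc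
    refine ⟨Function.update q c b, fun c' hc' => ?_, hb⟩
    rw [Function.update_of_ne (ne_of_mem_of_not_mem (Set.mem_union_left _ hc') hc), hqp c' hc']

lemma isCorner_diagEnds (c : Cell n m) (b : Bool) :
    isCorner (diagEnds c b).1 c ∧ isCorner (diagEnds c b).2 c := by
  cases b <;> unfold diagEnds evenDiag oddDiag isCorner <;> split_ifs <;> tauto

lemma neighborSet_diagGraph_eq {D D' : Set (Cell n m)} {p q : Cell n m → Bool} {v : Vertex n m}
    (hDD' : D ⊆ D') (hqp : ∀ c ∈ D, q c = p c) (hv : ∀ c, isCorner v c → c ∈ D) :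
    (DiagGraph D' q).neighborSet v = (DiagGraph D p).neighborSet v := by
  ext u
  simp only [SimpleGraph.mem_neighborSet, diagGraph_adj_iff]
  refine and_congr_right fun _ => ⟨fun ⟨c, _, hc⟩ => ?_, fun ⟨c, hcD, hc⟩ => ?_⟩
  · have hcD : c ∈ D := hv c <| by
      rcases hc with e | e
      · simpa [e] using (isCorner_diagEnds c (q c)).1
      · simpa [e] using (isCorner_diagEnds c (q c)).2
    exact ⟨c, hcD, hqp c hcD ▸ hc⟩
  · exact ⟨c, hDD' hcD, (hqp c hcD).symm ▸ hc⟩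

theorem extend_partial_solution_general (n m : ℕ) (K : Finset (Vertex n m × ℕ))
    (D : Set (Cell n m))
    (hD : ∀ c : Cell n m, (∃ q ∈ K, isCorner q.1 c) → c ∈ D)
    (p : Cell n m → Bool)
    (hacyc : (DiagGraph D p).IsAcyclic)
    (hdeg : ∀ q ∈ K, deg (DiagGraph D p) q.1 = q.2) :
    ∃ f : Cell n m → Bool, (∀ c ∈ D, f c = p c) ∧
      (DiagGraph (Set.univ : Set (Cell n m)) f).IsAcyclic ∧
      (∀ q ∈ K, deg (DiagGraph (Set.univ : Set (Cell n m)) f) q.1 = q.2) ∧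
      (∀ q ∈ K, deg (DiagGraph (Set.univ : Set (Cell n m)) f) q.1 =
          deg (DiagGraph D p) q.1) := by
  obtain ⟨f, hfp, hf⟩ := exists_isAcyclic_diagGraph_union hacyc Finset.univ
  rw [Finset.coe_univ, Set.union_univ] at hf
  have hdeg_eq : ∀ q ∈ K, deg (DiagGraph Set.univ f) q.1 = deg (DiagGraph D p) q.1 := by
    intro q hq
    rw [deg, deg, neighborSet_diagGraph_eq (Set.subset_univ D) hfp fun c hc => hD c ⟨q, hq, hc⟩]
  exact ⟨f, hfp, hf, fun q hq => (hdeg_eq q hq).trans (hdeg q hq), hdeg_eq⟩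

/-- If `D` contains every cell incident to a clued vertex and `p` is a
partial assignment on `D` whose diagonal graph is acyclic and gives every clued vertex
its clue value as degree, then `p` extends to a valid solution of the whole board, with
the degrees of clued vertices unchanged. -/
theorem extend_partial_solution (n m : ℕ) (K : Finset (Vertex n m × ℕ))
    (hK4 : ∀ q ∈ K, q.2 ≤ 4)
    (D : Set (Cell n m))
    (hD : ∀ c : Cell n m, (∃ q ∈ K, isCorner q.1 c) → c ∈ D)
    (p : Cell n m → Bool)
    (hacyc : (DiagGraph D p).IsAcyclic)
    (hdeg : ∀ q ∈ K, deg (DiagGraph D p) q.1 = q.2) :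
    ∃ f : Cell n m → Bool, (∀ c ∈ D, f c = p c) ∧
      (DiagGraph (Set.univ : Set (Cell n m)) f).IsAcyclic ∧
      (∀ q ∈ K, deg (DiagGraph (Set.univ : Set (Cell n m)) f) q.1 = q.2) ∧
      (∀ q ∈ K, deg (DiagGraph (Set.univ : Set (Cell n m)) f) q.1 =
          deg (DiagGraph D p) q.1) :=
  extend_partial_solution_general n m K D hD p hacyc hdeg

end Slant
end
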